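/- Let ξ* be the probability measure on [−1,1] with masses 1/6, 1/2, 1/3 at −1/2, 1/2, 1. Then for every (θ₁,θ₂) ∈ ℝ², ∫ (1 + x + x³ − θ₁ − θ₂x)² dξ*(x) ≥ 1/16, with equality iff (θ₁,θ₂) = (1, 7/4). -/
import Mathlib

open MeasureTheory ENNReal

noncomputable def xiAF : Measure ℝ :=
  ENNReal.ofReal (1 / 6) • Measure.dirac (-1 / 2) +
    ENNReal.ofReal (1 / 2) • Measure.dirac (1 / 2) +
    ENNReal.ofReal (1 / 3) • Measure.dirac 1

lemma integral_xiAF (f : ℝ → ℝ) :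
    ∫ x, f x ∂xiAF = (1/6) * f (-1/2) + (1/2) * f (1/2) + (1/3) * f 1 := by
  have hint : ∀ (c : ℝ) (a : ℝ), Integrable f (ENNReal.ofReal c • Measure.dirac a) := by
    intro c a
    have h0 : Integrable (fun _ : ℝ => f a) (Measure.dirac a) := integrable_const _
    have h1 : Integrable f (Measure.dirac a) := by
      refine h0.congr ?_
      rw [MeasureTheory.ae_dirac_eq]
      exact Filter.eventually_pure.2 rfl
    exact h1.smul_measure ENNReal.ofReal_ne_top
  rw [xiAF, integral_add_measure ((hint _ _).add_measure (hint _ _)) (hint _ _),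
    integral_add_measure (hint _ _) (hint _ _)]
  rw [integral_smul_measure, integral_smul_measure, integral_smul_measure,
    integral_dirac, integral_dirac, integral_dirac]
  rw [ENNReal.toReal_ofReal (by norm_num), ENNReal.toReal_ofReal (by norm_num),
    ENNReal.toReal_ofReal (by norm_num)]
  simp [smul_eq_mul]; try ring

theorem stmt_15 (θ₁ θ₂ : ℝ) :
    (1 / 16 : ℝ) ≤ ∫ x, (1 + x + x ^ 3 - θ₁ - θ₂ * x) ^ 2 ∂xiAF ∧
      ((∫ x, (1 + x + x ^ 3 - θ₁ - θ₂ * x) ^ 2 ∂xiAF) = 1 / 16 ↔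
        θ₁ = 1 ∧ θ₂ = 7 / 4) := by
  have h := integral_xiAF (fun x => (1 + x + x ^ 3 - θ₁ - θ₂ * x) ^ 2)
  rw [h]
  have key : (1/6) * (1 + (-1/2 : ℝ) + (-1/2) ^ 3 - θ₁ - θ₂ * (-1/2)) ^ 2 +
      (1/2) * (1 + (1/2 : ℝ) + (1/2) ^ 3 - θ₁ - θ₂ * (1/2)) ^ 2 +
      (1/3) * (1 + (1:ℝ) + 1 ^ 3 - θ₁ - θ₂ * 1) ^ 2
      = ((θ₁ - 1) + (θ₂ - 7/4)/2) ^ 2 + ((θ₂ - 7/4)) ^ 2 / 4 + 1/16 := by ring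
  rw [key]
  constructor
  · nlinarith [sq_nonneg ((θ₁ - 1) + (θ₂ - 7/4)/2), sq_nonneg (θ₂ - 7/4)]
  · constructor
    · intro he
      have h1 : ((θ₁ - 1) + (θ₂ - 7/4)/2) ^ 2 = 0 ∧ (θ₂ - 7/4) ^ 2 = 0 := by
        constructor <;> nlinarith [sq_nonneg ((θ₁ - 1) + (θ₂ - 7/4)/2), sq_nonneg (θ₂ - 7/4)]
      have h2 := pow_eq_zero_iff (n := 2) (by norm_num) |>.mp h1.2
      have h3 := pow_eq_zero_iff (n := 2) (by norm_num) |>.mp h1.1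
      constructor <;> linarith
    · rintro ⟨rfl, rfl⟩; ring
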